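/- Let (V,V^+,e) be an AOU space, Q_n^min := {∑ P_i ⊗ g_i : P_i ∈ M_n^+, g_i ∈ (V^+)^d} ⊆ M_n(V′), and Q_n^max := {(f_{ij}) ∈ M_n(V′) : (f_{ij}(v)) ∈ M_n^+ for all v ∈ V^+}. Then ^dQ_n^min = C_n^min(V) and (C_n^max(V))^d = Q_n^max. -/

import Mathlib

open scoped ComplexOrder
open Finset

noncomputable section

section Defs
variable {V : Type*} [AddCommGroup V] [Module ℂ V]

/-- The elementary tensor `a ⊗ v` in `M_n(V) ≅ M_n(ℂ) ⊗ V`. -/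
def eTensor {n : ℕ} (a : Matrix (Fin n) (Fin n) ℂ) (v : V) : Matrix (Fin n) (Fin n) V :=
  Matrix.of fun p q => a p q • v

/-- The conjugation `X* A X` of `A ∈ M_n(V)` by a scalar matrix `X ∈ M_{n,m}(ℂ)`. -/
def mconj {n m : ℕ} (X : Matrix (Fin n) (Fin m) ℂ) (A : Matrix (Fin n) (Fin n) V) :
    Matrix (Fin m) (Fin m) V :=
  Matrix.of fun i j => ∑ k, ∑ l, (star (X k i) * X l j) • A k l

/-- The diagonal matrix `e_n` with `e` in each diagonal entry. -/
def eMat (e : V) (n : ℕ) : Matrix (Fin n) (Fin n) V :=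
  Matrix.of fun i j => if i = j then e else 0

/-- The minimal cone `C_n^min(V)`. -/
def Cmin (pos : Set V) (n : ℕ) : Set (Matrix (Fin n) (Fin n) V) :=
  {M | ∀ lam : Fin n → ℂ, (∑ i, ∑ j, (star (lam i) * lam j) • M i j) ∈ pos}

/-- The cone `D_n^max(V)` of sums of tensors `a ⊗ v` with `a ∈ M_n⁺`, `v ∈ V⁺`. -/
def Dmax (pos : Set V) (n : ℕ) : Set (Matrix (Fin n) (Fin n) V) :=
  {M | ∃ (k : ℕ) (a : Fin k → Matrix (Fin n) (Fin n) ℂ) (v : Fin k → V),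
    (∀ i, (a i).PosSemidef) ∧ (∀ i, v i ∈ pos) ∧ M = ∑ i, eTensor (a i) (v i)}

/-- The maximal cone `C_n^max(V)`: the Archimedeanization of `D_n^max(V)`. -/
def Cmax (pos : Set V) (e : V) (n : ℕ) : Set (Matrix (Fin n) (Fin n) V) :=
  {M | ∀ r : ℝ, 0 < r → (r : ℂ) • eMat e n + M ∈ Dmax pos n}

end Defs

section StarDefs
variable {V : Type*} [AddCommGroup V] [Module ℂ V] [StarAddMonoid V] [StarModule ℂ V]

/-- `(V, pos)` is an ordered `*`-vector space. -/
def IsOrderedStar (pos : Set V) : Prop :=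
  (∀ v ∈ pos, star v = v) ∧
  (∀ r : ℝ, 0 ≤ r → ∀ v ∈ pos, (r : ℂ) • v ∈ pos) ∧
  (∀ v ∈ pos, ∀ w ∈ pos, v + w ∈ pos) ∧
  (∀ v ∈ pos, -v ∈ pos → v = 0)

/-- `(V, pos, e)` is an Archimedean order unit (AOU) space. -/
def IsAOU (pos : Set V) (e : V) : Prop :=
  IsOrderedStar pos ∧ star e = e ∧
  (∀ v : V, star v = v → ∃ r : ℝ, 0 < r ∧ (r : ℂ) • e - v ∈ pos) ∧
  (∀ v : V, (∀ r : ℝ, 0 < r → (r : ℂ) • e + v ∈ pos) → v ∈ pos)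

/-- A state on `(V, pos, e)`: a unital positive linear functional. -/
def IsState (pos : Set V) (e : V) (s : V →ₗ[ℂ] ℂ) : Prop :=
  s e = 1 ∧ ∀ v ∈ pos, 0 ≤ s v

/-- A positive linear functional. -/
def IsPosFunc (pos : Set V) (f : V →ₗ[ℂ] ℂ) : Prop := ∀ v ∈ pos, 0 ≤ f v

/-- A matrix ordering on the `*`-vector space `V`. -/
def IsMatrixOrdering (C : ∀ n : ℕ, Set (Matrix (Fin n) (Fin n) V)) : Prop :=
  (∀ (n : ℕ) (M : Matrix (Fin n) (Fin n) V), M ∈ C n → star M = M) ∧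
  (∀ (n : ℕ) (r : ℝ), 0 ≤ r → ∀ M ∈ C n, (r : ℂ) • M ∈ C n) ∧
  (∀ n : ℕ, ∀ M ∈ C n, ∀ N ∈ C n, M + N ∈ C n) ∧
  (∀ n : ℕ, ∀ M ∈ C n, -M ∈ C n → M = 0) ∧
  (∀ (n m : ℕ) (X : Matrix (Fin n) (Fin m) ℂ), ∀ M ∈ C n, mconj X M ∈ C m)

/-- `e` is a matrix order unit for the family `C`. -/
def IsMatrixOrderUnit (C : ∀ n : ℕ, Set (Matrix (Fin n) (Fin n) V)) (e : V) : Prop :=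
  star e = e ∧
  ∀ (n : ℕ) (M : Matrix (Fin n) (Fin n) V), star M = M →
    ∃ r : ℝ, 0 < r ∧ (r : ℂ) • eMat e n - M ∈ C n

/-- `e` is an Archimedean matrix order unit for the family `C`. -/
def IsArchMatrixOrderUnit (C : ∀ n : ℕ, Set (Matrix (Fin n) (Fin n) V)) (e : V) : Prop :=
  IsMatrixOrderUnit C e ∧
  ∀ (n : ℕ) (M : Matrix (Fin n) (Fin n) V),
    (∀ r : ℝ, 0 < r → (r : ℂ) • eMat e n + M ∈ C n) → M ∈ C n

/-- `(V, C, e)` is an (abstract) operator system. -/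
def IsOperatorSystem (C : ∀ n : ℕ, Set (Matrix (Fin n) (Fin n) V)) (e : V) : Prop :=
  IsMatrixOrdering C ∧ IsArchMatrixOrderUnit C e

/-- The ground-level cone of a matrix ordering, under `M_1(V) ≅ V`. -/
def groundPos (C : ∀ n : ℕ, Set (Matrix (Fin n) (Fin n) V)) : Set V :=
  {v | (Matrix.of fun _ _ : Fin 1 => v) ∈ C 1}

/-- An operator system structure on the AOU space `(V, pos, e)`. -/
def IsOpSysStructure (pos : Set V) (e : V) (C : ∀ n : ℕ, Set (Matrix (Fin n) (Fin n) V)) :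
    Prop :=
  IsOperatorSystem C e ∧ C 1 = {M | M 0 0 ∈ pos}

end StarDefs

section DualDefs
variable {V : Type*} [AddCommGroup V] [Module ℂ V] [StarAddMonoid V] [StarModule ℂ V]

/-- The adjoint functional `f*` with `f*(v) = conj (f (v*))`. -/
def starFunc (f : V →ₗ[ℂ] ℂ) : V →ₗ[ℂ] ℂ where
  toFun v := star (f (star v))
  map_add' v w := by simp
  map_smul' c v := by simp [star_smul, map_smul, mul_comm]

/-- The pairing between a matrix of functionals and a matrix over `V`:
`(f_{ij})((v_{ij})) = ∑_{ij} f_{ij}(v_{ij})`. -/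
def dPair {n : ℕ} (F : Matrix (Fin n) (Fin n) (V →ₗ[ℂ] ℂ))
    (A : Matrix (Fin n) (Fin n) V) : ℂ :=
  ∑ i, ∑ j, F i j (A i j)

/-- The dual cones `P_n^d` of a matrix ordering on `V`. -/
def dualCones (P : ∀ n : ℕ, Set (Matrix (Fin n) (Fin n) V)) (n : ℕ) :
    Set (Matrix (Fin n) (Fin n) (V →ₗ[ℂ] ℂ)) :=
  {F | ∀ A ∈ P n, 0 ≤ dPair F A}

/-- The predual cones `^dQ_n` of a matrix ordering on `V'`. -/
def preCones (Q : ∀ n : ℕ, Set (Matrix (Fin n) (Fin n) (V →ₗ[ℂ] ℂ))) (n : ℕ) :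
    Set (Matrix (Fin n) (Fin n) V) :=
  {A | ∀ F ∈ Q n, 0 ≤ dPair F A}

/-- A matrix ordering on the dual space `V'` (hermitian via `starFunc`,
compatibility under conjugation by scalar matrices). -/
def IsDualMatrixOrdering (Q : ∀ n : ℕ, Set (Matrix (Fin n) (Fin n) (V →ₗ[ℂ] ℂ))) : Prop :=
  (∀ (n : ℕ) (F : Matrix (Fin n) (Fin n) (V →ₗ[ℂ] ℂ)), F ∈ Q n →
    ∀ i j, F i j = starFunc (F j i)) ∧
  (∀ (n : ℕ) (r : ℝ), 0 ≤ r → ∀ F ∈ Q n, (r : ℂ) • F ∈ Q n) ∧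
  (∀ n : ℕ, ∀ F ∈ Q n, ∀ G ∈ Q n, F + G ∈ Q n) ∧
  (∀ n : ℕ, ∀ F ∈ Q n, -F ∈ Q n → F = 0) ∧
  (∀ (n m : ℕ) (X : Matrix (Fin n) (Fin m) ℂ), ∀ F ∈ Q n, mconj X F ∈ Q m)

/-- Weak*-closedness of a set of matrices of functionals: closedness in the topology
induced by the pairing against all of `M_n(V)`, with the topology of pointwise convergence. -/
def WeakStarClosed {n : ℕ} (Q : Set (Matrix (Fin n) (Fin n) (V →ₗ[ℂ] ℂ))) : Prop :=
  @IsClosed _ (TopologicalSpace.induced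
    (fun F : Matrix (Fin n) (Fin n) (V →ₗ[ℂ] ℂ) => fun A => dPair F A)
    Pi.topologicalSpace) Q

/-- The minimal norm on an AOU space: `‖v‖_m = sup { |s(v)| : s a state }`. -/
def minNorm (pos : Set V) (e : V) (v : V) : ℝ :=
  ⨆ s : {s : V →ₗ[ℂ] ℂ // IsState pos e s}, ‖s.1 v‖

/-- Bounded (continuous) linear functionals on `V`. -/
def IsBddFunc (pos : Set V) (e : V) (f : V →ₗ[ℂ] ℂ) : Prop :=
  ∃ c : ℝ, ∀ v, ‖f v‖ ≤ c * minNorm pos e v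

end DualDefs

end

/-!
A hermitian `v ∉ V⁺` is separated from `V⁺` by a positive functional. Since `e` is an
Archimedean order unit there is `δ > 0` with `s e + v ∈ V⁺ → δ ≤ s`; the Riesz extension
theorem, applied to `a e ↦ a` and to the real cone of those `x` with
`x + x* ∈ V⁺ - ℝ≥0 (v + δ e)`, gives a real functional that vanishes on skew-adjoint elements
and is `≤ -δ` at `v`, and its complexification is the separating functional. So `V⁺` is the
predual cone of the positive functionals, and testing `A` against the rank-one `λ*λ ⊗ f ∈ Q_n^min`
gives `^dQ_n^min = C_n^min(V)`.

For the second identity, `x*x ⊗ v ∈ D_n^max(V) ⊆ C_n^max(V)` pairs with `F` to `x* F(v) x`,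
and conversely `Q_n^max` is nonnegative on `D_n^max(V)` by the Schur product theorem; the
Archimedeanization adds nothing, since `0 ≤ r c + d` for all `r > 0` forces `0 ≤ d`.
-/

open Matrix

theorem Matrix.posSemidef_of_forall_dotProduct_mulVec_nonneg {n : Type*} [Fintype n]
    {A : Matrix n n ℂ} (h : ∀ x, 0 ≤ star x ⬝ᵥ (A *ᵥ x)) : A.PosSemidef := by
  classical
  rw [← Matrix.isPositive_toEuclideanLin_iff, LinearMap.isPositive_iff_complex]
  intro x
  have hx := Complex.nonneg_iff.mp (h x.ofLp)
  rw [← inner_conj_symm, EuclideanSpace.inner_eq_star_dotProduct]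
  simpa [dotProduct_comm _ (star _), Complex.ext_iff, ← hx.2] using hx.1

theorem Matrix.PosSemidef.sum_sum_mul_nonneg {n : Type*} [Fintype n] {A B : Matrix n n ℂ}
    (hA : A.PosSemidef) (hB : B.PosSemidef) : 0 ≤ ∑ p, ∑ q, A p q * B p q := by
  simpa [dotProduct, Matrix.mulVec] using (hA.hadamard hB).dotProduct_mulVec_nonneg 1

theorem Complex.nonneg_of_forall_pos_mul_add_nonneg {c d : ℂ}
    (h : ∀ r : ℝ, 0 < r → 0 ≤ (r : ℂ) * c + d) : 0 ≤ d := by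
  have hlim : Filter.Tendsto (fun r : ℝ => (r : ℂ) * c + d) (nhdsWithin 0 (Set.Ioi 0))
      (nhds d) := by
    have := ((Complex.continuous_ofReal.mul continuous_const).add continuous_const).tendsto
      (0 : ℝ) (f := fun r : ℝ => (r : ℂ) * c + d)
    simpa using this.mono_left nhdsWithin_le_nhds
  exact ge_of_tendsto hlim (eventually_nhdsWithin_of_forall h)

theorem PointedCone.exists_linearMap_eq_one_nonneg {E : Type*} [AddCommGroup E] [Module ℝ E]
    (s : PointedCone ℝ E) (e : E) (he : ∀ a : ℝ, a • e ∈ s → 0 ≤ a)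
    (hs : ∀ y, ∃ a : ℝ, a • e + y ∈ s) :
    ∃ g : E →ₗ[ℝ] ℝ, g e = 1 ∧ ∀ x ∈ s, 0 ≤ g x := by
  have he0 : e ≠ 0 := by
    rintro rfl
    linarith [he (-1) (by simp)]
  obtain ⟨g, hgf, hgs⟩ := riesz_extension s
    (LinearPMap.mkSpanSingleton (σ := RingHom.id ℝ) e (1 : ℝ) he0)
    (by
      rintro ⟨x, hx⟩ hxs
      obtain ⟨a, rfl⟩ := Submodule.mem_span_singleton.mp hx
      rw [LinearPMap.mkSpanSingleton'_apply]
      simpa using he a hxs)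
    (fun y => by
      obtain ⟨a, ha⟩ := hs y
      exact ⟨⟨a • e, Submodule.mem_span_singleton.mpr ⟨a, rfl⟩⟩, ha⟩)
  refine ⟨g, ?_, hgs⟩
  rw [hgf ⟨e, Submodule.mem_span_singleton_self e⟩, LinearPMap.mkSpanSingleton_apply]

namespace IsAOU

variable {V : Type*} [AddCommGroup V] [Module ℂ V] [StarAddMonoid V] {pos : Set V} {e : V}

theorem smul_mem (hA : IsAOU pos e) {r : ℝ} (hr : 0 ≤ r) {v : V} (hv : v ∈ pos) : r • v ∈ pos :=
  hA.1.2.1 r hr v hv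

theorem add_mem (hA : IsAOU pos e) {v w : V} (hv : v ∈ pos) (hw : w ∈ pos) : v + w ∈ pos :=
  hA.1.2.2.1 v hv w hw

theorem exists_smul_add_mem (hA : IsAOU pos e) {v : V} (hv : star v = v) :
    ∃ r : ℝ, 0 < r ∧ r • e + v ∈ pos := by
  obtain ⟨r, hr, h⟩ := hA.2.2.1 (-v) (by rw [star_neg, hv])
  exact ⟨r, hr, by simpa using h⟩

theorem zero_mem (hA : IsAOU pos e) : (0 : V) ∈ pos := by
  obtain ⟨r, -, h⟩ := hA.exists_smul_add_mem (star_zero V)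
  simpa using hA.smul_mem le_rfl h

theorem unit_mem (hA : IsAOU pos e) : e ∈ pos := by
  obtain ⟨r, hr, h⟩ := hA.exists_smul_add_mem hA.2.1
  have h' : (r + 1) • e ∈ pos := by rwa [add_smul, one_smul]
  simpa [inv_smul_smul₀ (by positivity : r + 1 ≠ 0)] using
    hA.smul_mem (inv_nonneg.mpr (by positivity : (0 : ℝ) ≤ r + 1)) h'

theorem sum_mem (hA : IsAOU pos e) {ι : Type*} (s : Finset ι) {f : ι → V}
    (h : ∀ i ∈ s, f i ∈ pos) : ∑ i ∈ s, f i ∈ pos :=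
  Finset.sum_induction f (· ∈ pos) (fun _ _ => hA.add_mem) hA.zero_mem h

theorem exists_pos_le_of_smul_add_mem (hA : IsAOU pos e) {v : V} (hv : v ∉ pos) :
    ∃ δ : ℝ, 0 < δ ∧ ∀ s : ℝ, s • e + v ∈ pos → δ ≤ s := by
  by_contra! h
  refine hv (hA.2.2.2 v fun r hr => ?_)
  obtain ⟨s, hs, hsr⟩ := h r hr
  have hsplit : (r : ℂ) • e + v = (r - s) • e + (s • e + v) := by
    rw [Complex.coe_smul, sub_smul]; abel
  rw [hsplit]
  exact hA.add_mem (hA.smul_mem (sub_nonneg.mpr hsr.le) hA.unit_mem) hs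

theorem nonneg_of_smul_mem (hA : IsAOU pos e) {v : V} (hv : star v = v) (hvn : v ∉ pos)
    {a : ℝ} (ha : a • e ∈ pos) : 0 ≤ a := by
  by_contra! hneg
  have hne : -e ∈ pos := by
    have h := hA.smul_mem (inv_nonneg.mpr (neg_nonneg.mpr hneg.le)) ha
    rwa [smul_smul, inv_neg, neg_mul, inv_mul_cancel₀ hneg.ne, neg_smul, one_smul] at h
  obtain ⟨r, hr, h⟩ := hA.exists_smul_add_mem hv
  refine hvn ?_
  simpa [smul_neg] using hA.add_mem (hA.smul_mem hr.le hne) h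

theorem mul_le_of_smul_add_smul_mem (hA : IsAOU pos e) {v : V} (hv : star v = v)
    (hvn : v ∉ pos) {δ : ℝ} (hgap : ∀ s : ℝ, s • e + v ∈ pos → δ ≤ s) {a c : ℝ} (hc : 0 ≤ c)
    (h : a • e + c • v ∈ pos) : c * δ ≤ a := by
  rcases hc.eq_or_lt with rfl | hc
  · simpa using hA.nonneg_of_smul_mem hv hvn (by simpa using h)
  · have h' := hA.smul_mem (inv_nonneg.mpr hc.le) h
    rw [smul_add, smul_smul, smul_smul, inv_mul_cancel₀ hc.ne', one_smul] at h'
    have := hgap _ h'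
    rw [inv_mul_eq_div, le_div_iff₀ hc] at this
    linarith

theorem im_eq_zero_of_posFunc (hA : IsAOU pos e) {f : V →ₗ[ℂ] ℂ} (hf : IsPosFunc pos f) {x : V}
    (hx : star x = x) : (f x).im = 0 := by
  obtain ⟨r, -, h⟩ := hA.exists_smul_add_mem hx
  have h₁ := (Complex.nonneg_iff.mp (hf _ h)).2
  have h₂ := (Complex.nonneg_iff.mp (hf e hA.unit_mem)).2
  rw [map_add, LinearMap.map_smul_of_tower, Complex.add_im, Complex.smul_im, ← h₂, smul_zero,
    zero_add] at h₁
  exact h₁.symm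

variable [StarModule ℂ V]

def realPartCone (hA : IsAOU pos e) (u : V) : PointedCone ℝ V :=
  ConvexCone.toPointedCone
    { carrier := {x | ∃ c : ℝ, 0 ≤ c ∧ x + star x + c • u ∈ pos}
      smul_mem' := by
        rintro r hr x ⟨c, hc, hx⟩
        refine ⟨r * c, mul_nonneg hr.le hc, ?_⟩
        convert hA.smul_mem hr.le hx using 1
        simp only [star_smul, star_trivial, smul_add, mul_smul]
      add_mem' := by
        rintro x ⟨c, hc, hx⟩ y ⟨d, hd, hy⟩
        refine ⟨c + d, add_nonneg hc hd, ?_⟩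
        convert hA.add_mem hx hy using 1
        rw [star_add, add_smul]
        abel }
    ⟨0, le_rfl, by simpa using hA.zero_mem⟩

theorem nonneg_of_smul_mem_realPartCone (hA : IsAOU pos e) {v : V} (hv : star v = v)
    (hvn : v ∉ pos) {δ : ℝ} (hgap : ∀ s : ℝ, s • e + v ∈ pos → δ ≤ s) {a : ℝ}
    (h : a • e ∈ hA.realPartCone (v + δ • e)) : 0 ≤ a := by
  obtain ⟨c, hc, h⟩ := h
  have h' : (2 * a + c * δ) • e + c • v ∈ pos := by
    convert h using 1
    simp only [star_smul, star_trivial, hA.2.1]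
    module
  linarith [hA.mul_le_of_smul_add_smul_mem hv hvn hgap hc h']

theorem exists_smul_add_mem_realPartCone (hA : IsAOU pos e) (u y : V) :
    ∃ a : ℝ, a • e + y ∈ hA.realPartCone u := by
  obtain ⟨r, -, hr⟩ := hA.exists_smul_add_mem (v := y + star y)
    (by rw [star_add, star_star, add_comm])
  refine ⟨r / 2, 0, le_rfl, ?_⟩
  convert hr using 1
  simp only [star_add, star_smul, star_trivial, hA.2.1]
  module

theorem exists_posFunc_re_neg (hA : IsAOU pos e) {v : V} (hv : star v = v) (hvn : v ∉ pos) :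
    ∃ f : V →ₗ[ℂ] ℂ, IsPosFunc pos f ∧ (f v).re < 0 := by
  obtain ⟨δ, hδ, hgap⟩ := hA.exists_pos_le_of_smul_add_mem hvn
  obtain ⟨g, hge, hg⟩ := (hA.realPartCone (v + δ • e)).exists_linearMap_eq_one_nonneg e
    (fun _ => hA.nonneg_of_smul_mem_realPartCone hv hvn hgap)
    (hA.exists_smul_add_mem_realPartCone _)
  have hskew : ∀ x : V, x + star x = 0 → g x = 0 := by
    intro x hx
    have h₁ := hg x ⟨0, le_rfl, by simpa [hx] using hA.zero_mem⟩
    have h₂ := hg (-x) ⟨0, le_rfl, by simpa [star_neg, ← neg_add, hx] using hA.zero_mem⟩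
    rw [map_neg] at h₂
    linarith
  have hgu : g (v + δ • e) ≤ 0 := by
    have h := hg (-(v + δ • e)) ⟨2, zero_le_two, ?_⟩
    · rw [map_neg] at h
      linarith
    · convert hA.zero_mem using 1
      rw [star_neg, star_add, hv, star_smul, star_trivial, hA.2.1]
      module
  have hI : ∀ x : V, star x = x → g (Complex.I • x) = 0 := fun x hx =>
    hskew _ (by rw [star_smul, hx, Complex.star_def, Complex.conj_I, neg_smul, add_neg_cancel])
  refine ⟨Module.Dual.extendRCLike g, fun p hp => ?_, ?_⟩
  · rw [Module.Dual.extendRCLike_apply, RCLike.I_to_complex, hI p (hA.1.1 p hp)]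
    have hp' : p + star p + (0 : ℝ) • (v + δ • e) ∈ pos := by
      simpa [hA.1.1 p hp, ← two_smul ℝ] using hA.smul_mem zero_le_two hp
    simpa using hg p ⟨0, le_rfl, hp'⟩
  · rw [← RCLike.re_to_complex, Module.Dual.re_extendRCLike_apply]
    rw [map_add, map_smul, hge, smul_eq_mul, mul_one] at hgu
    linarith

theorem mem_of_forall_re_posFunc_nonneg (hA : IsAOU pos e) {v : V} (hv : star v = v)
    (h : ∀ f : V →ₗ[ℂ] ℂ, IsPosFunc pos f → 0 ≤ (f v).re) : v ∈ pos := by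
  by_contra hvn
  obtain ⟨f, hf, hlt⟩ := hA.exists_posFunc_re_neg hv hvn
  linarith [h f hf]

theorem eq_zero_of_forall_posFunc_eq_zero (hA : IsAOU pos e) {x : V} (hx : star x = x)
    (h : ∀ f : V →ₗ[ℂ] ℂ, IsPosFunc pos f → f x = 0) : x = 0 :=
  hA.1.2.2.2 x (hA.mem_of_forall_re_posFunc_nonneg hx fun f hf => by simp [h f hf])
    (hA.mem_of_forall_re_posFunc_nonneg (by rw [star_neg, hx]) fun f hf => by simp [h f hf])

theorem mem_of_forall_posFunc_nonneg (hA : IsAOU pos e) {v : V}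
    (h : ∀ f : V →ₗ[ℂ] ℂ, IsPosFunc pos f → 0 ≤ f v) : v ∈ pos := by
  have hre : star (realPart v : V) = realPart v := (realPart v).prop
  have him : star (imaginaryPart v : V) = imaginaryPart v := (imaginaryPart v).prop
  have hzero : (imaginaryPart v : V) = 0 := by
    refine hA.eq_zero_of_forall_posFunc_eq_zero him fun f hf => Complex.ext ?_ ?_
    · have hv := (Complex.nonneg_iff.mp (h f hf)).2
      rw [← realPart_add_I_smul_imaginaryPart v, map_add, map_smul, Complex.add_im,
        hA.im_eq_zero_of_posFunc hf hre, smul_eq_mul, Complex.mul_im] at hv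
      simpa using hv.symm
    · exact hA.im_eq_zero_of_posFunc hf him
  have hv : v = realPart v := by
    conv_lhs => rw [← realPart_add_I_smul_imaginaryPart v, hzero, smul_zero, add_zero]
  rw [hv] at h ⊢
  exact hA.mem_of_forall_re_posFunc_nonneg hre fun f hf => (Complex.nonneg_iff.mp (h f hf)).1

end IsAOU

section Pairing

variable {V : Type*} [AddCommGroup V] [Module ℂ V] {n : ℕ}

theorem dPair_eTensor_left (a : Matrix (Fin n) (Fin n) ℂ) (g : V →ₗ[ℂ] ℂ)
    (A : Matrix (Fin n) (Fin n) V) : dPair (eTensor a g) A = g (∑ p, ∑ q, a p q • A p q) := by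
  simp [dPair, eTensor]

theorem dPair_eTensor_right (F : Matrix (Fin n) (Fin n) (V →ₗ[ℂ] ℂ))
    (a : Matrix (Fin n) (Fin n) ℂ) (v : V) :
    dPair F (eTensor a v) = ∑ p, ∑ q, a p q * F p q v := by
  simp [dPair, eTensor]

theorem dPair_sum_left {k : ℕ} (G : Fin k → Matrix (Fin n) (Fin n) (V →ₗ[ℂ] ℂ))
    (A : Matrix (Fin n) (Fin n) V) : dPair (∑ i, G i) A = ∑ i, dPair (G i) A := by
  simp only [dPair, Matrix.sum_apply, LinearMap.coe_sum, Finset.sum_apply]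
  exact (Finset.sum_congr rfl fun p _ => Finset.sum_comm).trans Finset.sum_comm

theorem dPair_sum_right {k : ℕ} (F : Matrix (Fin n) (Fin n) (V →ₗ[ℂ] ℂ))
    (B : Fin k → Matrix (Fin n) (Fin n) V) : dPair F (∑ i, B i) = ∑ i, dPair F (B i) := by
  simp only [dPair, Matrix.sum_apply, map_sum]
  exact (Finset.sum_congr rfl fun p _ => Finset.sum_comm).trans Finset.sum_comm

theorem dPair_smul_add_right (F : Matrix (Fin n) (Fin n) (V →ₗ[ℂ] ℂ)) (c : ℂ)
    (A B : Matrix (Fin n) (Fin n) V) : dPair F (c • A + B) = c * dPair F A + dPair F B := by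
  simp [dPair, Finset.sum_add_distrib, Finset.mul_sum]

end Pairing

section Cones

variable {V : Type*} [AddCommGroup V] [Module ℂ V] {pos : Set V} {e : V} {n : ℕ}

def Qmin (pos : Set V) (n : ℕ) : Set (Matrix (Fin n) (Fin n) (V →ₗ[ℂ] ℂ)) :=
  {F | ∃ (k : ℕ) (P : Fin k → Matrix (Fin n) (Fin n) ℂ) (g : Fin k → (V →ₗ[ℂ] ℂ)),
    (∀ i, (P i).PosSemidef) ∧ (∀ i, IsPosFunc pos (g i)) ∧ F = ∑ i, eTensor (P i) (g i)}

def Qmax (pos : Set V) (n : ℕ) : Set (Matrix (Fin n) (Fin n) (V →ₗ[ℂ] ℂ)) :=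
  {F | ∀ v ∈ pos, (Matrix.of fun i j => F i j v).PosSemidef}

theorem eTensor_mem_Qmin {P : Matrix (Fin n) (Fin n) ℂ} (hP : P.PosSemidef) {g : V →ₗ[ℂ] ℂ}
    (hg : IsPosFunc pos g) : eTensor P g ∈ Qmin pos n :=
  ⟨1, fun _ => P, fun _ => g, fun _ => hP, fun _ => hg, by simp⟩

theorem eTensor_mem_Dmax {a : Matrix (Fin n) (Fin n) ℂ} (ha : a.PosSemidef) {v : V}
    (hv : v ∈ pos) : eTensor a v ∈ Dmax pos n :=
  ⟨1, fun _ => a, fun _ => v, fun _ => ha, fun _ => hv, by simp⟩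

theorem eTensor_add_mem_Dmax {a : Matrix (Fin n) (Fin n) ℂ} (ha : a.PosSemidef) {v : V}
    (hv : v ∈ pos) {M : Matrix (Fin n) (Fin n) V} (hM : M ∈ Dmax pos n) :
    eTensor a v + M ∈ Dmax pos n := by
  obtain ⟨k, b, w, hb, hw, rfl⟩ := hM
  refine ⟨k + 1, Fin.cons a b, Fin.cons v w, Fin.cases ha hb, Fin.cases hv hw, ?_⟩
  simp [Fin.sum_univ_succ]

theorem smul_eMat_eq_eTensor (c : ℂ) : c • eMat e n = eTensor (c • 1) e := by
  ext p q
  by_cases h : p = q <;> simp [eMat, eTensor, h]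

theorem Dmax_subset_Cmax (he : e ∈ pos) : Dmax pos n ⊆ Cmax pos e n := fun M hM r hr => by
  rw [smul_eMat_eq_eTensor]
  exact eTensor_add_mem_Dmax (Matrix.PosSemidef.one.smul (Complex.zero_le_real.mpr hr.le)) he hM

theorem dPair_nonneg_of_mem_Qmax_of_mem_Dmax {F : Matrix (Fin n) (Fin n) (V →ₗ[ℂ] ℂ)}
    (hF : F ∈ Qmax pos n) {M : Matrix (Fin n) (Fin n) V} (hM : M ∈ Dmax pos n) :
    0 ≤ dPair F M := by
  obtain ⟨k, a, w, ha, hw, rfl⟩ := hM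
  rw [dPair_sum_right]
  refine Finset.sum_nonneg fun i _ => ?_
  rw [dPair_eTensor_right]
  exact (ha i).sum_sum_mul_nonneg (hF (w i) (hw i))

theorem dualCones_Cmax_eq_Qmax (he : e ∈ pos) : dualCones (Cmax pos e) n = Qmax pos n := by
  ext F
  constructor
  · intro hF v hv
    refine Matrix.posSemidef_of_forall_dotProduct_mulVec_nonneg fun x => ?_
    have h := hF _ (Dmax_subset_Cmax he
      (eTensor_mem_Dmax (Matrix.posSemidef_vecMulVec_star_self x) hv))
    rw [dPair_eTensor_right] at h
    convert h using 1
    simp only [dotProduct, mulVec, Finset.mul_sum, Pi.star_apply, vecMulVec_apply, Matrix.of_apply]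
    exact Finset.sum_congr rfl fun p _ => Finset.sum_congr rfl fun q _ => by ring
  · intro hF A hAC
    refine Complex.nonneg_of_forall_pos_mul_add_nonneg (c := dPair F (eMat e n)) fun r hr => ?_
    rw [← dPair_smul_add_right]
    exact dPair_nonneg_of_mem_Qmax_of_mem_Dmax hF (hAC r hr)

variable [StarAddMonoid V]

theorem sum_smul_mem_of_mem_Cmin (hA : IsAOU pos e) {M : Matrix (Fin n) (Fin n) V}
    (hM : M ∈ Cmin pos n) {a : Matrix (Fin n) (Fin n) ℂ} (ha : a.PosSemidef) :
    ∑ p, ∑ q, a p q • M p q ∈ pos := by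
  obtain ⟨m, w, rfl⟩ := Matrix.posSemidef_iff_eq_sum_vecMulVec.mp ha
  have hsum : ∑ p, ∑ q, (∑ i, vecMulVec (w i) (star (w i))) p q • M p q
      = ∑ i, ∑ p, ∑ q, (star (star (w i) p) * star (w i) q) • M p q := by
    simp only [Matrix.sum_apply, vecMulVec_apply, Finset.sum_smul, Pi.star_apply, star_star]
    exact (Finset.sum_congr rfl fun p _ => Finset.sum_comm).trans Finset.sum_comm
  rw [hsum]
  exact hA.sum_mem _ fun i _ => hM (star (w i))

variable [StarModule ℂ V]

theorem preCones_Qmin_eq_Cmin (hA : IsAOU pos e) : preCones (Qmin pos) n = Cmin pos n := by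
  ext A
  constructor
  · intro hAQ lam
    refine hA.mem_of_forall_posFunc_nonneg fun f hf => ?_
    have h := hAQ _ (eTensor_mem_Qmin (Matrix.posSemidef_vecMulVec_star_self lam) hf)
    simpa [dPair_eTensor_left, vecMulVec_apply] using h
  · rintro hC F ⟨k, P, g, hP, hg, rfl⟩
    rw [dPair_sum_left]
    refine Finset.sum_nonneg fun i _ => ?_
    rw [dPair_eTensor_left]
    exact hg i _ (sum_smul_mem_of_mem_Cmin hA hC (hP i))

end Cones

/-- `^d(Q_n^min) = C_n^min(V)` and `(C_n^max(V))^d = Q_n^max`. -/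
theorem preCones_Qmin_and_dual_Cmax
    {V : Type*} [AddCommGroup V] [Module ℂ V] [StarAddMonoid V] [StarModule ℂ V]
    (pos : Set V) (e : V) (hA : IsAOU pos e) (n : ℕ) :
    preCones (fun m => {F : Matrix (Fin m) (Fin m) (V →ₗ[ℂ] ℂ) |
        ∃ (k : ℕ) (P : Fin k → Matrix (Fin m) (Fin m) ℂ) (g : Fin k → (V →ₗ[ℂ] ℂ)),
          (∀ i, (P i).PosSemidef) ∧ (∀ i, IsPosFunc pos (g i)) ∧
          F = ∑ i, eTensor (P i) (g i)}) n = Cmin pos n ∧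
    dualCones (Cmax pos e) n =
      {F | ∀ v ∈ pos, (Matrix.of fun i j => F i j v).PosSemidef} :=
  ⟨preCones_Qmin_eq_Cmin hA, dualCones_Cmax_eq_Qmax hA.unit_mem⟩
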